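/- arXiv:0808.2659 — 2 statements merged into one kernel-verified Lean document; each statement's English description precedes it below -/
import Mathlib

section
/- Let p be a prime, r, n ≥ 1, and let u1 ∈ Z_{p^r}^n be non-redundant. For 0 ≤ i ≤ r let D_i(u1) = {u2 ∈ Z_{p^r}^n : u2 ≠ u1 and D(u1,u2) = p^i·Z_{p^r}}. Then |D_r(u1)| = p^r − 1, and for each 0 ≤ i < r, |D_i(u1)| = p^r·(p^{(r−i)(n−1)} − p^{(r−i−1)(n−1)}). -/
/-- The additive subgroup `p^i · Z_{p^r} = {p^i * x : x ∈ Z_{p^r}}` of `Z_{p^r}`. -/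
def pZ (p r i : ℕ) : AddSubgroup (ZMod (p ^ r)) where
  carrier := Set.range (fun x : ZMod (p ^ r) => (p : ZMod (p ^ r)) ^ i * x)
  add_mem' := by rintro a b ⟨x, rfl⟩ ⟨y, rfl⟩; exact ⟨x + y, by ring⟩
  zero_mem' := ⟨0, by ring⟩
  neg_mem' := by rintro a ⟨x, rfl⟩; exact ⟨-x, by ring⟩

/-- `D(u1,u2)`: the smallest additive subgroup of `Z_{p^r}` containing all the determinants
`m_{k,l}(u1,u2) = u1_k·u2_l − u2_k·u1_l` with `k ≠ l` and `u1_k` a unit. -/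
def Dgrp {p r n : ℕ} (u1 u2 : Fin n → ZMod (p ^ r)) : AddSubgroup (ZMod (p ^ r)) :=
  AddSubgroup.closure
    {m | ∃ k l : Fin n, k ≠ l ∧ IsUnit (u1 k) ∧ m = u1 k * u2 l - u2 k * u1 l}

/- ### Auxiliary lemmas -/

lemma aux_mul_mem {N : ℕ} [NeZero N] (H : AddSubgroup (ZMod N)) {x : ZMod N} (a : ZMod N)
    (hx : x ∈ H) : a * x ∈ H := by
  have h : a * x = a.val • x := by
    rw [nsmul_eq_mul, ZMod.natCast_val, ZMod.cast_id]
  rw [h]; exact AddSubgroup.nsmul_mem H hx a.val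

lemma mem_pZ_iff {p r i : ℕ} {x : ZMod (p ^ r)} :
    x ∈ pZ p r i ↔ ∃ y, (p : ZMod (p ^ r)) ^ i * y = x := Iff.rfl

lemma pZ_succ_le {p r : ℕ} (i : ℕ) : pZ p r (i + 1) ≤ pZ p r i := by
  rintro x ⟨y, rfl⟩; exact ⟨p * y, by ring⟩

lemma pow_cast_ne_zero {p r : ℕ} (hp : p.Prime) {i : ℕ} (hi : i < r) :
    ((p : ZMod (p ^ r))) ^ i ≠ 0 := by
  rw [← Nat.cast_pow, Ne, ZMod.natCast_eq_zero_iff]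
  intro hdvd
  exact absurd (Nat.le_of_dvd (pow_pos hp.pos i) hdvd)
    (not_le.2 (Nat.pow_lt_pow_right hp.one_lt hi))

lemma pow_cast_r_eq_zero {p r : ℕ} : ((p : ZMod (p ^ r))) ^ r = 0 := by
  rw [← Nat.cast_pow, ZMod.natCast_self]

lemma pow_not_mem_pZ_succ {p r : ℕ} (hp : p.Prime) {i : ℕ} (hi : i < r) :
    ((p : ZMod (p ^ r))) ^ i ∉ pZ p r (i + 1) := by
  rintro ⟨y, hy⟩
  have hy' : (p : ZMod (p ^ r)) ^ (i + 1) * y = (p : ZMod (p ^ r)) ^ i := hy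
  have h1 : (p : ZMod (p ^ r)) ^ (r - 1 - i) * ((p : ZMod (p ^ r)) ^ (i + 1) * y)
      = (p : ZMod (p ^ r)) ^ (r - 1 - i) * (p : ZMod (p ^ r)) ^ i := by rw [hy']
  have h2 : (p : ZMod (p ^ r)) ^ (r - 1 - i) * ((p : ZMod (p ^ r)) ^ (i + 1) * y)
      = (p : ZMod (p ^ r)) ^ r * y := by
    rw [← mul_assoc, ← pow_add]
    congr 2
    omega
  have h3 : (p : ZMod (p ^ r)) ^ (r - 1 - i) * (p : ZMod (p ^ r)) ^ i
      = (p : ZMod (p ^ r)) ^ (r - 1) := by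
    rw [← pow_add]; congr 1; omega
  rw [h2, h3, pow_cast_r_eq_zero, zero_mul] at h1
  exact pow_cast_ne_zero hp (by omega) h1.symm

lemma nonunit_eq {p r : ℕ} (hp : p.Prime) (hr : 1 ≤ r) {y : ZMod (p ^ r)}
    (hy : ¬ IsUnit y) : ∃ z, y = (p : ZMod (p ^ r)) * z := by
  haveI : NeZero (p ^ r) := ⟨(pow_pos hp.pos r).ne'⟩
  have hdvd : p ∣ y.val := by
    by_contra hnd
    have hco : Nat.Coprime y.val (p ^ r) :=
      Nat.Coprime.pow_right r ((Nat.coprime_comm.1 (hp.coprime_iff_not_dvd.2 hnd)))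
    have := (ZMod.isUnit_iff_coprime y.val (p ^ r)).2 hco
    rw [ZMod.natCast_val, ZMod.cast_id] at this
    exact hy this
  obtain ⟨z, hz⟩ := hdvd
  refine ⟨(z : ZMod (p ^ r)), ?_⟩
  have : y = ((y.val : ℕ) : ZMod (p ^ r)) := by rw [ZMod.natCast_val, ZMod.cast_id]
  rw [this, hz]
  push_cast
  ring

lemma pZ_r_eq_bot {p r : ℕ} : pZ p r r = ⊥ := by
  ext x
  simp only [mem_pZ_iff, pow_cast_r_eq_zero, zero_mul, AddSubgroup.mem_bot]
  constructor
  · rintro ⟨y, rfl⟩; rfl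
  · rintro rfl; exact ⟨0, rfl⟩

lemma closure_eq_pZ_iff {p r : ℕ} (hp : p.Prime) {i : ℕ} (hi : i < r)
    (S : Set (ZMod (p ^ r))) :
    AddSubgroup.closure S = pZ p r i ↔ S ⊆ pZ p r i ∧ ¬ S ⊆ pZ p r (i + 1) := by
  haveI : NeZero (p ^ r) := ⟨(pow_pos hp.pos r).ne'⟩
  constructor
  · intro h
    refine ⟨h ▸ AddSubgroup.subset_closure, fun hS => ?_⟩
    have hle : pZ p r i ≤ pZ p r (i + 1) := by
      rw [← h]
      exact AddSubgroup.closure_le _ |>.2 hS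
    exact pow_not_mem_pZ_succ hp hi (hle ⟨1, mul_one _⟩)
  · rintro ⟨h1, h2⟩
    refine le_antisymm ((AddSubgroup.closure_le _).2 h1) ?_
    rw [Set.not_subset] at h2
    obtain ⟨s, hsS, hs2⟩ := h2
    obtain ⟨y, hy⟩ := h1 hsS
    have hyu : IsUnit y := by
      by_contra hyu
      obtain ⟨z, rfl⟩ := nonunit_eq hp (by omega) hyu
      exact hs2 ⟨z, by rw [← hy]; ring⟩
    rintro x ⟨xx, rfl⟩
    have hy' : (p : ZMod (p ^ r)) ^ i * y = s := hy
    have hmem : s ∈ AddSubgroup.closure S := AddSubgroup.subset_closure hsS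
    have key : (p : ZMod (p ^ r)) ^ i * xx = (xx * ↑hyu.unit⁻¹) * s := by
      rw [← hy']
      have h1 : (↑hyu.unit⁻¹ : ZMod (p ^ r)) * y = 1 := hyu.val_inv_mul
      calc (p : ZMod (p ^ r)) ^ i * xx = (p : ZMod (p ^ r)) ^ i * xx * (↑hyu.unit⁻¹ * y) := by
            rw [h1, mul_one]
        _ = (xx * ↑hyu.unit⁻¹) * ((p : ZMod (p ^ r)) ^ i * y) := by ring
    show (p : ZMod (p ^ r)) ^ i * xx ∈ AddSubgroup.closure S
    rw [key]
    exact aux_mul_mem _ _ hmem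

lemma Dgrp_eq {p r n : ℕ} [NeZero (p ^ r)] (u1 u2 : Fin n → ZMod (p ^ r)) (j : Fin n)
    (hj : IsUnit (u1 j)) :
    Dgrp u1 u2 = AddSubgroup.closure (Set.range fun l : {l : Fin n // l ≠ j} =>
      u2 l - (u2 j * ↑hj.unit⁻¹) * u1 l) := by
  have hinv : (↑hj.unit⁻¹ : ZMod (p ^ r)) * u1 j = 1 := hj.val_inv_mul
  set c : ZMod (p ^ r) := u2 j * ↑hj.unit⁻¹ with hc
  have hcj : c * u1 j = u2 j := by
    rw [hc, mul_assoc, hinv, mul_one]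
  refine le_antisymm ((AddSubgroup.closure_le _).2 ?_) ((AddSubgroup.closure_le _).2 ?_)
  · rintro m ⟨k, l, hkl, hk, rfl⟩
    have helper : ∀ l : Fin n, u2 l - c * u1 l ∈
        AddSubgroup.closure (Set.range fun l : {l : Fin n // l ≠ j} => u2 l - c * u1 l) := by
      intro l
      by_cases h : l = j
      · subst h
        rw [hcj, sub_self]
        exact AddSubgroup.zero_mem _
      · exact AddSubgroup.subset_closure ⟨⟨l, h⟩, rfl⟩
    have hid : u1 k * u2 l - u2 k * u1 l
        = u1 k * (u2 l - c * u1 l) - u1 l * (u2 k - c * u1 k) := by ring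
    rw [hid]
    exact AddSubgroup.sub_mem _ (aux_mul_mem _ _ (helper l)) (aux_mul_mem _ _ (helper k))
  · rintro x ⟨l, rfl⟩
    show u2 l.1 - c * u1 l.1 ∈ (Dgrp u1 u2 : Set (ZMod (p ^ r)))
    have hm : u1 j * u2 l - u2 j * u1 l ∈ Dgrp u1 u2 :=
      AddSubgroup.subset_closure ⟨j, l.1, Ne.symm l.2, hj, rfl⟩
    have key : u2 l - c * u1 l = ↑hj.unit⁻¹ * (u1 j * u2 l - u2 j * u1 l) := by
      rw [hc]
      calc u2 l - u2 j * ↑hj.unit⁻¹ * u1 l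
          = (↑hj.unit⁻¹ * u1 j) * u2 l - ↑hj.unit⁻¹ * (u2 j * u1 l) := by rw [hinv]; ring
        _ = ↑hj.unit⁻¹ * (u1 j * u2 l - u2 j * u1 l) := by ring
    rw [key]
    exact aux_mul_mem _ _ hm

lemma card_pZ {p r : ℕ} (hp : p.Prime) {i : ℕ} (hi : i ≤ r) :
    Nat.card (pZ p r i) = p ^ (r - i) := by
  haveI : NeZero (p ^ r) := ⟨(pow_pos hp.pos r).ne'⟩
  haveI : NeZero (p ^ (r - i)) := ⟨(pow_pos hp.pos _).ne'⟩
  have hpr : p ^ r = p ^ i * p ^ (r - i) := by rw [← pow_add]; congr 1; omega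
  have key1 : ∀ a b : ℕ, a < p ^ (r - i) → b < p ^ (r - i) →
      ((p ^ i * a : ℕ) : ZMod (p ^ r)) = ((p ^ i * b : ℕ) : ZMod (p ^ r)) → a = b := by
    intro a b ha hb h
    rw [ZMod.natCast_eq_natCast_iff, hpr] at h
    exact (Nat.ModEq.mul_left_cancel' (pow_pos hp.pos i).ne' h).eq_of_lt_of_lt ha hb
  have key2 : ∀ a : ℕ,
      ((p ^ i * (a % p ^ (r - i)) : ℕ) : ZMod (p ^ r)) = ((p ^ i * a : ℕ) : ZMod (p ^ r)) := by
    intro a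
    rw [ZMod.natCast_eq_natCast_iff, hpr]
    exact Nat.ModEq.mul_left' _ (Nat.mod_modEq a _)
  set f : ZMod (p ^ (r - i)) → pZ p r i := fun z =>
    ⟨((p ^ i * z.val : ℕ) : ZMod (p ^ r)), ⟨((z.val : ℕ) : ZMod (p ^ r)), by push_cast; ring⟩⟩
    with hf
  have hbij : Function.Bijective f := by
    constructor
    · intro z1 z2 h
      have h' : ((p ^ i * z1.val : ℕ) : ZMod (p ^ r)) = ((p ^ i * z2.val : ℕ) : ZMod (p ^ r)) :=
        congrArg Subtype.val h
      exact ZMod.val_injective _ (key1 _ _ (ZMod.val_lt z1) (ZMod.val_lt z2) h')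
    · rintro ⟨x, y, hy⟩
      have hy' : (p : ZMod (p ^ r)) ^ i * y = x := hy
      refine ⟨((y.val : ℕ) : ZMod (p ^ (r - i))), Subtype.ext ?_⟩
      show ((p ^ i * (((y.val : ℕ) : ZMod (p ^ (r - i))).val) : ℕ) : ZMod (p ^ r)) = x
      rw [ZMod.val_natCast, key2, ← hy']
      push_cast
      rw [ZMod.natCast_val, ZMod.cast_id]
  rw [Nat.card_congr (Equiv.ofBijective f hbij).symm, Nat.card_zmod]

lemma card_diff {α : Type*} [Fintype α] (A B : α → Prop) (h : ∀ x, B x → A x) :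
    Nat.card {x // A x ∧ ¬ B x} = Nat.card {x // A x} - Nat.card {x // B x} := by
  classical
  simp only [Nat.card_eq_fintype_card, Fintype.card_subtype]
  rw [show (Finset.univ.filter fun x => A x ∧ ¬ B x)
      = (Finset.univ.filter fun x => A x) \ (Finset.univ.filter fun x => B x) from by
    ext x; simp only [Finset.mem_filter, Finset.mem_sdiff, Finset.mem_univ, true_and]]
  exact Finset.card_sdiff_of_subset (by
    intro x hx
    simp only [Finset.mem_filter, Finset.mem_univ, true_and] at *
    exact h x hx)

/-- The coordinates-change equivalence. -/
noncomputable def Phi {p r n : ℕ} [NeZero (p ^ r)] (u1 : Fin n → ZMod (p ^ r)) (j : Fin n)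
    (hj : IsUnit (u1 j)) :
    (Fin n → ZMod (p ^ r)) ≃ (ZMod (p ^ r)) × ({l : Fin n // l ≠ j} → ZMod (p ^ r)) where
  toFun u2 := (u2 j, fun l => u2 l - (u2 j * ↑hj.unit⁻¹) * u1 l)
  invFun q l := if h : l = j then q.1 else q.2 ⟨l, h⟩ + (q.1 * ↑hj.unit⁻¹) * u1 l
  left_inv u2 := by
    funext l
    by_cases h : l = j
    · subst h; exact dif_pos rfl
    · show (if h' : l = j then u2 j
          else (u2 l - (u2 j * ↑hj.unit⁻¹) * u1 l) + (u2 j * ↑hj.unit⁻¹) * u1 l) = u2 l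
      rw [dif_neg h]; ring
  right_inv q := by
    obtain ⟨a, v⟩ := q
    have h1 : (fun l => if h : l = j then a else v ⟨l, h⟩ + (a * ↑hj.unit⁻¹) * u1 l) j = a :=
      dif_pos rfl
    refine Prod.ext h1 ?_
    funext l
    show (if h : (l : Fin n) = j then a else v ⟨l, h⟩ + (a * ↑hj.unit⁻¹) * u1 l)
        - ((if h : j = j then a else v ⟨j, h⟩ + (a * ↑hj.unit⁻¹) * u1 j) * ↑hj.unit⁻¹) * u1 l
        = v l
    rw [dif_pos rfl, dif_neg l.2]
    ring

theorem stmt4 (p r n : ℕ) (hp : p.Prime) (hr : 1 ≤ r) (hn : 1 ≤ n)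
    (u1 : Fin n → ZMod (p ^ r)) (hu1 : ∃ j, IsUnit (u1 j)) :
    Nat.card {u2 : Fin n → ZMod (p ^ r) // u2 ≠ u1 ∧ Dgrp u1 u2 = pZ p r r}
        = p ^ r - 1 ∧
    ∀ i < r,
      Nat.card {u2 : Fin n → ZMod (p ^ r) // u2 ≠ u1 ∧ Dgrp u1 u2 = pZ p r i}
        = p ^ r * (p ^ ((r - i) * (n - 1)) - p ^ ((r - i - 1) * (n - 1))) := by
  haveI : NeZero (p ^ r) := ⟨(pow_pos hp.pos r).ne'⟩
  obtain ⟨j, hj⟩ := hu1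
  have hinv : (↑hj.unit⁻¹ : ZMod (p ^ r)) * u1 j = 1 := hj.val_inv_mul
  have hPhiu1 : Phi u1 j hj u1 = (u1 j, 0) := by
    refine Prod.ext rfl ?_
    funext l
    show u1 l - (u1 j * ↑hj.unit⁻¹) * u1 l = 0
    rw [show u1 j * ↑hj.unit⁻¹ = (1 : ZMod (p ^ r)) by rw [mul_comm]; exact hinv]
    ring
  -- master equivalence for any i
  have master : ∀ i : ℕ,
      Nat.card {u2 : Fin n → ZMod (p ^ r) // u2 ≠ u1 ∧ Dgrp u1 u2 = pZ p r i}
      = Nat.card {q : (ZMod (p ^ r)) × ({l : Fin n // l ≠ j} → ZMod (p ^ r)) //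
          q ≠ (u1 j, 0) ∧ AddSubgroup.closure (Set.range q.2) = pZ p r i} := by
    intro i
    refine Nat.card_congr (Equiv.subtypeEquiv (Phi u1 j hj) fun u2 => ?_)
    constructor
    · rintro ⟨h1, h2⟩
      refine ⟨fun heq => h1 ?_, ?_⟩
      · have := (Phi u1 j hj).injective (heq.trans hPhiu1.symm)
        exact this
      · rw [← h2, Dgrp_eq u1 u2 j hj]
        rfl
    · rintro ⟨h1, h2⟩
      refine ⟨fun heq => h1 (by rw [heq, hPhiu1]), ?_⟩
      rw [Dgrp_eq u1 u2 j hj]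
      exact h2
  constructor
  · -- i = r case
    rw [master r]
    have hequiv : {q : (ZMod (p ^ r)) × ({l : Fin n // l ≠ j} → ZMod (p ^ r)) //
        q ≠ (u1 j, 0) ∧ AddSubgroup.closure (Set.range q.2) = pZ p r r}
        ≃ {a : ZMod (p ^ r) // a ≠ u1 j} := by
      have hiff : ∀ q : (ZMod (p ^ r)) × ({l : Fin n // l ≠ j} → ZMod (p ^ r)),
          (q ≠ (u1 j, 0) ∧ AddSubgroup.closure (Set.range q.2) = pZ p r r)
          ↔ (q.1 ≠ u1 j ∧ q.2 = 0) := by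
        intro q
        rw [pZ_r_eq_bot, AddSubgroup.closure_eq_bot_iff]
        constructor
        · rintro ⟨h1, h2⟩
          have hq2 : q.2 = 0 := by
            funext l
            have := h2 ⟨l, rfl⟩
            simpa using this
          refine ⟨fun hq1 => h1 ?_, hq2⟩
          exact Prod.ext hq1 hq2
        · rintro ⟨h1, h2⟩
          refine ⟨fun heq => h1 (by rw [heq]), ?_⟩
          rw [h2]
          rintro x ⟨l, rfl⟩
          simp
      refine (Equiv.subtypeEquivRight hiff).trans ?_
      exact {
        toFun := fun q => ⟨q.1.1, q.2.1⟩
        invFun := fun a => ⟨(a.1, 0), a.2, rfl⟩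
        left_inv := fun q => Subtype.ext (Prod.ext rfl q.2.2.symm)
        right_inv := fun a => rfl }
    rw [Nat.card_congr hequiv, Nat.card_eq_fintype_card]
    classical
    rw [Fintype.card_subtype_compl, Fintype.card_subtype_eq, ZMod.card]
  · -- i < r case
    intro i hi
    rw [master i]
    have hiff : ∀ q : (ZMod (p ^ r)) × ({l : Fin n // l ≠ j} → ZMod (p ^ r)),
        (q ≠ (u1 j, 0) ∧ AddSubgroup.closure (Set.range q.2) = pZ p r i)
        ↔ ((∀ l, q.2 l ∈ pZ p r i) ∧ ¬ (∀ l, q.2 l ∈ pZ p r (i + 1))) := by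
      intro q
      rw [closure_eq_pZ_iff hp hi, Set.range_subset_iff,
        show (Set.range q.2 ⊆ ↑(pZ p r (i + 1))) ↔ ∀ l, q.2 l ∈ pZ p r (i + 1) from
          Set.range_subset_iff]
      constructor
      · rintro ⟨_, h2, h3⟩; exact ⟨h2, h3⟩
      · rintro ⟨h2, h3⟩
        refine ⟨fun heq => h3 fun l => ?_, h2, h3⟩
        have : q.2 = 0 := congrArg Prod.snd heq
        rw [this]
        exact AddSubgroup.zero_mem _
    have hequiv : {q : (ZMod (p ^ r)) × ({l : Fin n // l ≠ j} → ZMod (p ^ r)) //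
        q ≠ (u1 j, 0) ∧ AddSubgroup.closure (Set.range q.2) = pZ p r i}
        ≃ (ZMod (p ^ r)) × {v : {l : Fin n // l ≠ j} → ZMod (p ^ r) //
            (∀ l, v l ∈ pZ p r i) ∧ ¬ (∀ l, v l ∈ pZ p r (i + 1))} :=
      (Equiv.subtypeEquivRight hiff).trans
      { toFun := fun q => (q.1.1, ⟨q.1.2, q.2⟩)
        invFun := fun q => ⟨(q.1, q.2.1), q.2.2⟩
        left_inv := fun q => rfl
        right_inv := fun q => rfl }
    rw [Nat.card_congr hequiv, Nat.card_prod, Nat.card_zmod]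
    congr 1
    rw [card_diff _ _ (fun v hv l => pZ_succ_le i (hv l))]
    have hcard_sub : Nat.card {l : Fin n // l ≠ j} = n - 1 := by
      classical
      rw [Nat.card_eq_fintype_card, Fintype.card_subtype_compl, Fintype.card_subtype_eq,
        Fintype.card_fin]
    have hpi : ∀ k : ℕ, k ≤ r →
        Nat.card {v : {l : Fin n // l ≠ j} → ZMod (p ^ r) // ∀ l, v l ∈ pZ p r k}
        = p ^ ((r - k) * (n - 1)) := by
      intro k hk
      rw [Nat.card_congr (Equiv.subtypePiEquivPi (p := fun _ x => x ∈ pZ p r k)),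
        Nat.card_fun, card_pZ hp hk, hcard_sub, ← pow_mul]
    rw [hpi i (le_of_lt hi), hpi (i + 1) hi, Nat.sub_sub]
end

section
/- Let p be a prime, r ≥ 1, 0 ≤ i ≤ r, 𝒮 a finite set, and P a probability mass function on Z_{p^r} × 𝒮. For z ∈ Z_{p^r} and s ∈ 𝒮 write P_c(z,s) = Σ_{z' ∈ z + p^i·Z_{p^r}} P(z', s). Define Q on Z_{p^r} × (p^i·Z_{p^r}) × 𝒮 by Q(z,w,s) = P(z,s)·P(z+w, s)/P_c(z,s) when P(z,s) > 0, and Q(z,w,s) = 0 when P(z,s) = 0. Then: (a) Q is a probability mass function; (b) Σ_{w ∈ p^i·Z_{p^r}} Q(z,w,s) = P(z,s) for all (z,s); (c) Σ_{w ∈ p^i·Z_{p^r}} Q(z−w, w, s) = P(z,s) for all (z,s), i.e., for (Z,W,S) ~ Q the pair (Z+W, S) has distribution P; and (d) for (Z,W,S) ~ Q one has H(W | Z, S) = H(Z | S) − H([Z]_i | S), where the entropies on the right-hand side are computed for (Z,S) ~ P. -/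
/-!
For nonnegative `P` the case split in `Q` is vacuous: `Q(z,w,s) = P(z,s) P(z+w,s) / Pc(z,s)`,
so given `(Z, S)` the point `Z + W` is a conditionally independent copy of `Z` inside the coset
`[Z]_i`. Both `(Z, S)` and `(Z + W, S)` then have law `P`, and `log Q` splits as
`log P(Z,S) + log P(Z+W,S) - log P([Z]_i, S)`, giving `H(Q) = 2 H(P) - H([Z]_i, S)`.
Since `(W, Z, S)` determines the sample, `H(W | Z, S) = H(Q) - H(P) = H(P) - H([Z]_i, S)`.
-/

open scoped Classical

noncomputable section

/-- Base-2 Shannon entropy of a probability mass function on a finite type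
(with the convention `0 · log 0 = 0`, automatic since `Real.logb 2 0 = 0`). -/
def ent {A : Type*} [Fintype A] (P : A → ℝ) : ℝ :=
  -∑ a, P a * Real.logb 2 (P a)

/-- Distribution (pushforward pmf) of a random variable `X` on a finite
probability space with weights `μ`. -/
def distOf {Ω A : Type*} [Fintype Ω] (μ : Ω → ℝ) (X : Ω → A) : A → ℝ :=
  fun a => ∑ ω, if X ω = a then μ ω else 0

/-- Entropy `H(X)` of a random variable `X` on a finite probability space. -/
def Hent {Ω A : Type*} [Fintype Ω] [Fintype A] (μ : Ω → ℝ) (X : Ω → A) : ℝ :=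
  ent (distOf μ X)

/-- Conditional entropy `H(X | Y) = H(X,Y) − H(Y)`. -/
def condEnt {Ω A B : Type*} [Fintype Ω] [Fintype A] [Fintype B]
    (μ : Ω → ℝ) (X : Ω → A) (Y : Ω → B) : ℝ :=
  Hent μ (fun ω => (X ω, Y ω)) - Hent μ Y

instance {G : Type*} [AddGroup G] [Finite G] (H : AddSubgroup G) : Fintype (G ⧸ H) :=
  Fintype.ofFinite _

instance {G : Type*} [AddGroup G] [Finite G] (H : AddSubgroup G) : Fintype H :=
  Fintype.ofFinite _

/-- A sequence `x ∈ A^n` is strongly `ε`-typical for the pmf `Q` if each empirical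
frequency is within `ε` of `Q a`, and symbols of zero probability never occur. -/
def StronglyTypical {A : Type*} [Fintype A] {n : ℕ} (Q : A → ℝ)
    (x : Fin n → A) (ε : ℝ) : Prop :=
  ∀ a : A,
    |((Finset.univ.filter (fun j => x j = a)).card : ℝ) / n - Q a| ≤ ε ∧
    (Q a = 0 → (Finset.univ.filter (fun j => x j = a)).card = 0)


section distOf

variable {Ω A B : Type*} [Fintype Ω] [Fintype A] [Fintype B]

lemma sum_distOf_mul (μ : Ω → ℝ) (X : Ω → A) (g : A → ℝ) :
    ∑ a, distOf μ X a * g a = ∑ ω, μ ω * g (X ω) := by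
  simp only [distOf, Finset.sum_mul, ite_mul, zero_mul]
  rw [Finset.sum_comm]
  simp

lemma sum_distOf (μ : Ω → ℝ) (X : Ω → A) : ∑ a, distOf μ X a = ∑ ω, μ ω := by
  simpa using sum_distOf_mul μ X 1

lemma distOf_fst_equiv (μ : Ω → ℝ) (e : Ω ≃ A × B) (a : A) :
    distOf μ (fun ω => (e ω).1) a = ∑ b, μ (e.symm (a, b)) := by
  rw [distOf, ← e.symm.sum_comp, Fintype.sum_prod_type]
  simp

lemma ent_distOf_of_injective (μ : Ω → ℝ) {X : Ω → A} (hX : X.Injective) :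
    ent (distOf μ X) = ent μ := by
  have hdist : ∀ ω, distOf μ X (X ω) = μ ω := fun ω => by simp [distOf, hX.eq_iff]
  have hzero : ∀ a ∉ Finset.univ.image X, distOf μ X a = 0 := by
    intro a ha
    refine Finset.sum_eq_zero fun ω _ => if_neg ?_
    rintro rfl
    exact ha (Finset.mem_image_of_mem _ (Finset.mem_univ ω))
  unfold ent
  rw [← Finset.sum_subset (Finset.subset_univ (Finset.univ.image X))
      fun a _ ha => by simp [hzero a ha],
    Finset.sum_image fun _ _ _ _ h => hX h]
  simp only [hdist]

end distOf

section cosetCoupling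

variable {G S : Type*} [AddCommGroup G] (H : AddSubgroup G) [Fintype H]
  (P : G × S → ℝ)

def cosetMass (z : G) (s : S) : ℝ := ∑ w : H, P (z + w, s)

def cosetCoupling (ω : G × H × S) : ℝ :=
  if 0 < P (ω.1, ω.2.2) then
    P (ω.1, ω.2.2) * P (ω.1 + ω.2.1, ω.2.2) / cosetMass H P ω.1 ω.2.2
  else 0

lemma cosetMass_add (z : G) (w : H) (s : S) : cosetMass H P (z + w) s = cosetMass H P z s :=
  Fintype.sum_equiv (Equiv.addLeft w) _ _ fun v => by simp [add_assoc]

lemma sum_sub_eq_cosetMass (z : G) (s : S) :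
    ∑ w : H, P (z - w, s) = cosetMass H P z s :=
  Fintype.sum_equiv (Equiv.neg H) _ _ fun w => by simp [sub_eq_add_neg]

variable {P}

lemma cosetMass_nonneg (hP : ∀ zs, 0 ≤ P zs) (z : G) (s : S) : 0 ≤ cosetMass H P z s :=
  Finset.sum_nonneg fun _ _ => hP _

lemma le_cosetMass (hP : ∀ zs, 0 ≤ P zs) (z : G) (w : H) (s : S) :
    P (z + w, s) ≤ cosetMass H P z s :=
  Finset.single_le_sum (f := fun w : H => P (z + w, s)) (fun _ _ => hP _) (Finset.mem_univ w)

lemma mul_cosetMass_div_cosetMass (hP : ∀ zs, 0 ≤ P zs) (z : G) (s : S) :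
    P (z, s) * cosetMass H P z s / cosetMass H P z s = P (z, s) := by
  rcases eq_or_ne (cosetMass H P z s) 0 with h | h
  · simpa [h] using (le_antisymm (by simpa [h] using le_cosetMass H hP z 0 s) (hP (z, s))).symm
  · exact mul_div_cancel_right₀ _ h

lemma cosetCoupling_apply (hP : ∀ zs, 0 ≤ P zs) (z : G) (w : H) (s : S) :
    cosetCoupling H P (z, w, s) = P (z, s) * P (z + w, s) / cosetMass H P z s := by
  rcases (hP (z, s)).lt_or_eq with h | h
  · exact if_pos h
  · simp [cosetCoupling, ← h]

lemma cosetCoupling_nonneg (hP : ∀ zs, 0 ≤ P zs) (ω : G × H × S) :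
    0 ≤ cosetCoupling H P ω := by
  obtain ⟨z, w, s⟩ := ω
  rw [cosetCoupling_apply H hP]
  exact div_nonneg (mul_nonneg (hP _) (hP _)) (cosetMass_nonneg H hP z s)

lemma sum_cosetCoupling_fiber (hP : ∀ zs, 0 ≤ P zs) (z : G) (s : S) :
    ∑ w : H, cosetCoupling H P (z, w, s) = P (z, s) := by
  simp only [cosetCoupling_apply H hP, ← Finset.sum_div, ← Finset.mul_sum]
  exact mul_cosetMass_div_cosetMass H hP z s

lemma sum_cosetCoupling_sub_fiber (hP : ∀ zs, 0 ≤ P zs) (z : G) (s : S) :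
    ∑ w : H, cosetCoupling H P (z - w, w, s) = P (z, s) := by
  have hterm : ∀ w : H, cosetCoupling H P (z - w, w, s) =
      P (z - w, s) * P (z, s) / cosetMass H P z s := fun w => by
    rw [cosetCoupling_apply H hP, sub_add_cancel, sub_eq_add_neg, ← AddSubgroup.coe_neg,
      cosetMass_add]
  rw [Fintype.sum_congr _ _ hterm, ← Finset.sum_div, ← Finset.sum_mul, sum_sub_eq_cosetMass,
    mul_comm]
  exact mul_cosetMass_div_cosetMass H hP z s

lemma mul_logb_cosetCoupling (hP : ∀ zs, 0 ≤ P zs) (z : G) (w : H) (s : S) :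
    cosetCoupling H P (z, w, s) * Real.logb 2 (cosetCoupling H P (z, w, s)) =
      cosetCoupling H P (z, w, s) * (Real.logb 2 (P (z, s)) + Real.logb 2 (P (z + w, s)) -
        Real.logb 2 (cosetMass H P z s)) := by
  rcases eq_or_ne (cosetCoupling H P (z, w, s)) 0 with hQ | hQ
  · simp [hQ]
  rw [cosetCoupling_apply H hP] at hQ ⊢
  obtain ⟨hmul, hmass⟩ := div_ne_zero_iff.mp hQ
  obtain ⟨hz, hzw⟩ := mul_ne_zero_iff.mp hmul
  rw [Real.logb_div hmul hmass, Real.logb_mul hz hzw]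

variable [Fintype G] [Fintype S]

lemma cosetMass_eq_distOf [Fintype (G ⧸ H)] (z : G) (s : S) :
    cosetMass H P z s = distOf P (fun zs => ((zs.1 : G ⧸ H), zs.2)) ((z : G ⧸ H), s) := by
  have hshift : ∑ w : H, P (z + w, s) =
      ∑ z' ∈ Finset.univ.filter fun z' : G => (z' : G ⧸ H) = z, P (z', s) := by
    rw [← Finset.sum_subtype (Finset.univ.filter (· ∈ H)) (by simp) fun w => P (z + w, s)]
    refine Finset.sum_nbij' (z + ·) (· - z) ?_ ?_ ?_ ?_ fun _ _ => rfl <;>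
      simp [QuotientAddGroup.eq_iff_sub_mem]
  rw [cosetMass, hshift, distOf, Finset.sum_filter, Fintype.sum_prod_type]
  simp [ite_and]

lemma distOf_cosetCoupling_fst_snd (hP : ∀ zs, 0 ≤ P zs) :
    distOf (cosetCoupling H P) (fun ω => (ω.1, ω.2.2)) = P := by
  funext ⟨z, s⟩
  let e : G × H × S ≃ (G × S) × H :=
    { toFun := fun ω => ((ω.1, ω.2.2), ω.2.1)
      invFun := fun x => (x.1.1, x.2, x.1.2)
      left_inv := fun _ => rfl
      right_inv := fun _ => rfl }
  exact (distOf_fst_equiv _ e (z, s)).trans (sum_cosetCoupling_fiber H hP z s)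

lemma distOf_cosetCoupling_add_snd (hP : ∀ zs, 0 ≤ P zs) :
    distOf (cosetCoupling H P) (fun ω => (ω.1 + ω.2.1, ω.2.2)) = P := by
  funext ⟨z, s⟩
  let e : G × H × S ≃ (G × S) × H :=
    { toFun := fun ω => ((ω.1 + ω.2.1, ω.2.2), ω.2.1)
      invFun := fun x => (x.1.1 - x.2, x.2, x.1.2)
      left_inv := fun _ => by simp
      right_inv := fun _ => by simp }
  exact (distOf_fst_equiv _ e (z, s)).trans (sum_cosetCoupling_sub_fiber H hP z s)

lemma sum_cosetCoupling (hP : ∀ zs, 0 ≤ P zs) (hP1 : ∑ zs, P zs = 1) :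
    ∑ ω, cosetCoupling H P ω = 1 := by
  rw [← sum_distOf _ fun ω => (ω.1, ω.2.2), distOf_cosetCoupling_fst_snd H hP, hP1]

lemma ent_cosetCoupling (hP : ∀ zs, 0 ≤ P zs) [Fintype (G ⧸ H)] :
    ent (cosetCoupling H P) = 2 * ent P - Hent P (fun zs => ((zs.1 : G ⧸ H), zs.2)) := by
  have hZS (g : G × S → ℝ) :
      ∑ ω, cosetCoupling H P ω * g (ω.1, ω.2.2) = ∑ zs, P zs * g zs := by
    rw [← sum_distOf_mul, distOf_cosetCoupling_fst_snd H hP]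
  have hZWS (g : G × S → ℝ) :
      ∑ ω, cosetCoupling H P ω * g (ω.1 + ω.2.1, ω.2.2) = ∑ zs, P zs * g zs := by
    rw [← sum_distOf_mul, distOf_cosetCoupling_add_snd H hP]
  have hcoset : ∑ zs, P zs * Real.logb 2 (cosetMass H P zs.1 zs.2) =
      -Hent P (fun zs => ((zs.1 : G ⧸ H), zs.2)) := by
    simp only [cosetMass_eq_distOf H, Hent, ent, neg_neg]
    exact (sum_distOf_mul P _ fun c => Real.logb 2 (distOf P _ c)).symm
  calc ent (cosetCoupling H P)
      = -∑ ω, cosetCoupling H P ω * (Real.logb 2 (P (ω.1, ω.2.2)) +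
          Real.logb 2 (P (ω.1 + ω.2.1, ω.2.2)) - Real.logb 2 (cosetMass H P ω.1 ω.2.2)) := by
        rw [ent]
        congr 1
        exact Fintype.sum_congr _ _ fun ⟨z, w, s⟩ => mul_logb_cosetCoupling H hP z w s
    _ = -(∑ zs, P zs * Real.logb 2 (P zs) + ∑ zs, P zs * Real.logb 2 (P zs) -
          ∑ zs, P zs * Real.logb 2 (cosetMass H P zs.1 zs.2)) := by
        simp only [mul_add, mul_sub, Finset.sum_add_distrib, Finset.sum_sub_distrib,
          hZS fun zs => Real.logb 2 (P zs), hZWS fun zs => Real.logb 2 (P zs),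
          hZS fun zs => Real.logb 2 (cosetMass H P zs.1 zs.2)]
    _ = 2 * ent P - Hent P (fun zs => ((zs.1 : G ⧸ H), zs.2)) := by
        rw [hcoset, ent]
        ring

lemma condEnt_cosetCoupling (hP : ∀ zs, 0 ≤ P zs) [Fintype (G ⧸ H)] :
    condEnt (cosetCoupling H P) (fun ω => (ω.2.1 : G)) (fun ω => (ω.1, ω.2.2)) =
      condEnt P Prod.fst Prod.snd - condEnt P (fun zs => (zs.1 : G ⧸ H)) Prod.snd := by
  have hWZS : Hent (cosetCoupling H P) (fun ω => ((ω.2.1 : G), (ω.1, ω.2.2))) =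
      ent (cosetCoupling H P) :=
    ent_distOf_of_injective _ fun ⟨_, _, _⟩ ⟨_, _, _⟩ h => by
      obtain ⟨hw, rfl, rfl⟩ := by simpa only [Prod.mk.injEq] using h
      rw [Subtype.ext hw]
  have hZS : Hent (cosetCoupling H P) (fun ω => (ω.1, ω.2.2)) = ent P := by
    rw [Hent, distOf_cosetCoupling_fst_snd H hP]
  have hP' : Hent P (fun zs => (zs.1, zs.2)) = ent P := ent_distOf_of_injective P fun _ _ h => h
  rw [condEnt, condEnt, condEnt, hWZS, hZS, hP', ent_cosetCoupling H hP]
  ring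

end cosetCoupling

theorem stmt8_general (p r i : ℕ) [NeZero (p ^ r)]
    {𝒮 : Type*} [Fintype 𝒮]
    (P : ZMod (p ^ r) × 𝒮 → ℝ) (hP0 : ∀ zs, 0 ≤ P zs) (hP1 : ∑ zs, P zs = 1)
    (Pc : ZMod (p ^ r) → 𝒮 → ℝ)
    (hPc : ∀ z s, Pc z s = ∑ w : pZ p r i, P (z + (w : ZMod (p ^ r)), s))
    (Q : ZMod (p ^ r) × (pZ p r i) × 𝒮 → ℝ)
    (hQ : ∀ (z : ZMod (p ^ r)) (w : pZ p r i) (s : 𝒮),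
      Q (z, w, s) =
        if 0 < P (z, s) then P (z, s) * P (z + (w : ZMod (p ^ r)), s) / Pc z s else 0) :
    -- (a) Q is a probability mass function
    ((∀ zws, 0 ≤ Q zws) ∧ ∑ zws, Q zws = 1) ∧
    -- (b) marginal over w is P
    (∀ (z : ZMod (p ^ r)) (s : 𝒮), ∑ w : pZ p r i, Q (z, w, s) = P (z, s)) ∧
    -- (c) (Z+W, S) has distribution P
    (∀ (z : ZMod (p ^ r)) (s : 𝒮),
      ∑ w : pZ p r i, Q (z - (w : ZMod (p ^ r)), w, s) = P (z, s)) ∧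
    -- (d) H(W | Z,S) under Q equals H(Z|S) − H([Z]_i|S) under P
    condEnt Q (fun ω => ((ω.2.1 : pZ p r i) : ZMod (p ^ r))) (fun ω => (ω.1, ω.2.2))
      = condEnt P Prod.fst Prod.snd
        - condEnt P
            (fun zs => ((QuotientAddGroup.mk zs.1) : ZMod (p ^ r) ⧸ pZ p r i))
            Prod.snd := by
  obtain rfl : Pc = cosetMass (pZ p r i) P := funext fun z => funext (hPc z)
  obtain rfl : Q = cosetCoupling (pZ p r i) P := funext fun ⟨z, w, s⟩ => hQ z w s
  exact ⟨⟨cosetCoupling_nonneg _ hP0, sum_cosetCoupling _ hP0 hP1⟩,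
    sum_cosetCoupling_fiber _ hP0, sum_cosetCoupling_sub_fiber _ hP0,
    condEnt_cosetCoupling _ hP0⟩

theorem stmt8 (p r i : ℕ) (hp : p.Prime) (hr : 1 ≤ r) (hi : i ≤ r) [NeZero (p ^ r)]
    {𝒮 : Type*} [Fintype 𝒮]
    (P : ZMod (p ^ r) × 𝒮 → ℝ) (hP0 : ∀ zs, 0 ≤ P zs) (hP1 : ∑ zs, P zs = 1)
    (Pc : ZMod (p ^ r) → 𝒮 → ℝ)
    (hPc : ∀ z s, Pc z s = ∑ w : pZ p r i, P (z + (w : ZMod (p ^ r)), s))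
    (Q : ZMod (p ^ r) × (pZ p r i) × 𝒮 → ℝ)
    (hQ : ∀ (z : ZMod (p ^ r)) (w : pZ p r i) (s : 𝒮),
      Q (z, w, s) =
        if 0 < P (z, s) then P (z, s) * P (z + (w : ZMod (p ^ r)), s) / Pc z s else 0) :
    -- (a) Q is a probability mass function
    ((∀ zws, 0 ≤ Q zws) ∧ ∑ zws, Q zws = 1) ∧
    -- (b) marginal over w is P
    (∀ (z : ZMod (p ^ r)) (s : 𝒮), ∑ w : pZ p r i, Q (z, w, s) = P (z, s)) ∧
    -- (c) (Z+W, S) has distribution P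
    (∀ (z : ZMod (p ^ r)) (s : 𝒮),
      ∑ w : pZ p r i, Q (z - (w : ZMod (p ^ r)), w, s) = P (z, s)) ∧
    -- (d) H(W | Z,S) under Q equals H(Z|S) − H([Z]_i|S) under P
    condEnt Q (fun ω => ((ω.2.1 : pZ p r i) : ZMod (p ^ r))) (fun ω => (ω.1, ω.2.2))
      = condEnt P Prod.fst Prod.snd
        - condEnt P
            (fun zs => ((QuotientAddGroup.mk zs.1) : ZMod (p ^ r) ⧸ pZ p r i))
            Prod.snd :=
  stmt8_general p r i P hP0 hP1 Pc hPc Q hQ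

end
end
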